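/- Let Q ∈ SO(3) with tr(Q) > −1. Define the configuration error function Ψ = 2 − √(1 + tr(Q)) and the attitude error vector e_R = (1/(2√(1 + tr Q))) (Q − Qᵀ)∨, where (·)∨ is the inverse of the hat map. Then ‖e_R‖² ≤ Ψ ≤ 2‖e_R‖². -/

import Mathlib

/-! For a rotation `Q` with trace `t`, the entries of `Q` equal their cofactors, and combining these
identities with the unit length of the columns gives `‖(Q - Qᵀ)∨‖² = (3 - t)(1 + t)`; in particular
`t ≤ 3`. Hence `‖e_R‖² = (3 - t) / 4 = (2 - s)(2 + s) / 4` with `s = √(1 + t) ∈ (0, 2]`, while `Ψ = 2 - s`;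
the sandwich is then `2 ≤ 2 + s ≤ 4`. -/

open Matrix

noncomputable def enorm3 (v : Fin 3 → ℝ) : ℝ := Real.sqrt (∑ i, v i ^ 2)

def vee (M : Matrix (Fin 3) (Fin 3) ℝ) : Fin 3 → ℝ := ![M 2 1, M 0 2, M 1 0]

lemma Matrix.adjugate_eq_det_smul_transpose {n R : Type*} [Fintype n] [DecidableEq n] [CommRing R]
    {Q : Matrix n n R} (hQ : Qᵀ * Q = 1) : Q.adjugate = Q.det • Qᵀ := by
  calc Q.adjugate = Q.adjugate * (Q * Qᵀ) := by rw [mul_eq_one_comm.mp hQ, mul_one]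
    _ = Q.det • Qᵀ := by rw [← mul_assoc, adjugate_mul, smul_mul_assoc, one_mul]

lemma sum_sq_vee_sub_transpose {Q : Matrix (Fin 3) (Fin 3) ℝ} (hQ : Qᵀ * Q = 1)
    (hdet : Q.det = 1) : ∑ i, vee (Q - Qᵀ) i ^ 2 = (3 - Q.trace) * (1 + Q.trace) := by
  have hcol (i : Fin 3) : ∑ k, Q k i ^ 2 = 1 := by
    simpa [mul_apply, sq] using congrFun (congrFun hQ i) i
  have hcof (i : Fin 3) : Q.adjugate i i = Q i i := by
    rw [adjugate_eq_det_smul_transpose hQ, hdet, one_smul, transpose_apply]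
  have h0 := hcol 0
  have h1 := hcol 1
  have h2 := hcol 2
  have e0 := hcof 0
  have e1 := hcof 1
  have e2 := hcof 2
  simp only [Fin.sum_univ_three] at h0 h1 h2
  simp only [adjugate_fin_three, of_apply, cons_val', cons_val_zero, cons_val_one, cons_val_two,
    empty_val', cons_val_fin_one, tail_cons, vecHead] at e0 e1 e2
  simp only [vee, Fin.sum_univ_three, trace_fin_three, Matrix.sub_apply, transpose_apply,
    cons_val_zero, cons_val_one, cons_val_two, head_cons, tail_cons]
  linear_combination h0 + h1 + h2 + 2 * e0 + 2 * e1 + 2 * e2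

lemma enorm3_sq (v : Fin 3 → ℝ) : enorm3 v ^ 2 = ∑ i, v i ^ 2 :=
  Real.sq_sqrt (Finset.sum_nonneg fun i _ => sq_nonneg (v i))

lemma three_sub_div_four_le_two_sub_sqrt {t : ℝ} (h1 : -1 ≤ t) (h3 : t ≤ 3) :
    (3 - t) / 4 ≤ 2 - √(1 + t) := by
  have hs := Real.sq_sqrt (by linarith : 0 ≤ 1 + t)
  nlinarith [Real.sqrt_nonneg (1 + t)]

lemma two_sub_sqrt_le_three_sub_div_two {t : ℝ} (h1 : -1 ≤ t) (h3 : t ≤ 3) :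
    2 - √(1 + t) ≤ 2 * ((3 - t) / 4) := by
  have hs := Real.sq_sqrt (by linarith : 0 ≤ 1 + t)
  nlinarith [Real.sqrt_nonneg (1 + t)]

theorem config_error_sandwich (Q : Matrix (Fin 3) (Fin 3) ℝ)
    (hQ : Qᵀ * Q = 1) (hQdet : Q.det = 1) (htr : -1 < Q.trace)
    (Ψ : ℝ) (hΨ : Ψ = 2 - Real.sqrt (1 + Q.trace))
    (eR : Fin 3 → ℝ)
    (heR : eR = (1 / (2 * Real.sqrt (1 + Q.trace))) • vee (Q - Qᵀ)) :
    enorm3 eR ^ 2 ≤ Ψ ∧ Ψ ≤ 2 * enorm3 eR ^ 2 := by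
  have hkey := sum_sq_vee_sub_transpose hQ hQdet
  have hpos : 0 < 1 + Q.trace := by linarith
  have htr3 : Q.trace ≤ 3 := by
    nlinarith [Finset.sum_nonneg fun i (_ : i ∈ Finset.univ) => sq_nonneg (vee (Q - Qᵀ) i)]
  have hnorm : enorm3 eR ^ 2 = (3 - Q.trace) / 4 := by
    simp only [enorm3_sq, heR, Pi.smul_apply, smul_eq_mul, mul_pow, ← Finset.mul_sum, hkey,
      div_pow, Real.sq_sqrt hpos.le]
    field_simp
    ring
  rw [hnorm, hΨ]
  exact ⟨three_sub_div_four_le_two_sub_sqrt htr.le htr3,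
    two_sub_sqrt_le_three_sub_div_two htr.le htr3⟩
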